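/- Concatenation property: for the TASEP height function h(x, t) there exists, for each ending point (x, t), a backwards path τ ↦ x(τ) with x(t) = x such that for every τ ∈ [0, t], h(x, t) = min_{y ∈ ℤ} { h(y, τ) + h^step_{y,τ}(x, t) }, with the minimum attained at y = x(τ). The path is defined by: x(s−) = x(s) except at suppressed jump attempts at the current location x(s), when x(s−) = x(s) + 1 if h(x(s),s) = h(x(s)+1,s) + 1, and x(s−) = x(s) − 1 if h(x(s),s) = h(x(s)−1,s) + 1. -/

import Mathlib

/-- A TASEP height function: nearest-neighbor increments of absolute value 1. -/
def IsHeightFun (h : ℤ → ℤ) : Prop := ∀ x : ℤ, |h (x + 1) - h x| = 1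

/-- The corner-flip update at site `x`: if `x` is a strict local minimum of `h`,
then `h x` increases by `2`; otherwise nothing happens. -/
def tasepFlip (x : ℤ) (h : ℤ → ℤ) : ℤ → ℤ :=
  if h x < h (x - 1) ∧ h x < h (x + 1) then Function.update h x (h x + 2) else h

/-- Apply a (time-ordered) sequence of Poisson clock events, given as the list of their
sites, to a height function. -/
def applyEvents (L : List ℤ) (h : ℤ → ℤ) : ℤ → ℤ :=
  L.foldl (fun g z => tasepFlip z g) h

/-!
Corner flips are attractive: on height functions the dynamics is monotone and commutes with
adding constants. Since a height function is 1-Lipschitz, `h ≤ h y + |· - y|`, so evolving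
both sides gives `h(x,t) ≤ h(y,τ) + h^step_{y,τ}(x,t)` for every `y`. For the reverse
inequality one follows the backward path one event at a time: if the minimum after an event
is attained at `p`, then it is attained before the event at the site given by the paper's
rule, because there the wedge (shifted by the height) still lies below `h + |· - p|` after
the event.
-/

lemma IsHeightFun.step {h : ℤ → ℤ} (hh : IsHeightFun h) (x : ℤ) :
    h (x + 1) = h x + 1 ∨ h (x + 1) = h x - 1 := by
  rcases (abs_eq zero_le_one).mp (hh x) with e | e <;> omega

lemma IsHeightFun.step_sub {h : ℤ → ℤ} (hh : IsHeightFun h) (x : ℤ) :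
    h x = h (x - 1) + 1 ∨ h x = h (x - 1) - 1 := by
  simpa using hh.step (x - 1)

lemma IsHeightFun.le_add_abs_sub {h : ℤ → ℤ} (hh : IsHeightFun h) (a b : ℤ) :
    h a ≤ h b + |a - b| := by
  obtain ⟨d, rfl⟩ : ∃ d, a = b + d := ⟨a - b, by ring⟩
  rw [add_sub_cancel_left]
  induction d using Int.induction_on with
  | zero => simp
  | succ i ih =>
    rw [abs_of_nonneg (by omega : (0 : ℤ) ≤ i)] at ih
    rw [abs_of_nonneg (by omega : (0 : ℤ) ≤ i + 1), ← add_assoc]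
    rcases hh.step (b + i) with e | e <;> omega
  | pred i ih =>
    rw [abs_of_nonpos (by omega : -(i : ℤ) ≤ 0)] at ih
    rw [abs_of_nonpos (by omega : -(i : ℤ) - 1 ≤ 0)]
    rcases hh.step_sub (b + -i) with e | e <;> rw [← add_sub_assoc] <;> omega

lemma IsHeightFun.const_add {g : ℤ → ℤ} (hg : IsHeightFun g) (c : ℤ) :
    IsHeightFun (fun u => c + g u) := by
  intro x
  simpa using hg x

def wedge (y : ℤ) : ℤ → ℤ := fun u => |u - y|

lemma isHeightFun_wedge (y : ℤ) : IsHeightFun (wedge y) := by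
  intro x
  simp only [wedge]
  rcases le_or_gt y x with hxy | hxy
  · rw [abs_of_nonneg (by omega : (0 : ℤ) ≤ x + 1 - y), abs_of_nonneg (by omega : (0 : ℤ) ≤ x - y)]
    norm_num
  · rw [abs_of_nonpos (by omega : x + 1 - y ≤ 0), abs_of_neg (by omega : x - y < 0)]
    norm_num

lemma tasepFlip_wedge_of_ne {z y : ℤ} (hzy : z ≠ y) : tasepFlip z (wedge y) = wedge y := by
  rw [tasepFlip, if_neg]
  rintro ⟨h₁, h₂⟩
  simp only [wedge] at h₁ h₂
  rcases abs_cases (z - y) with ⟨_, _⟩ | ⟨_, _⟩ <;>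
    rcases abs_cases (z - 1 - y) with ⟨_, _⟩ | ⟨_, _⟩ <;>
    rcases abs_cases (z + 1 - y) with ⟨_, _⟩ | ⟨_, _⟩ <;> omega

lemma tasepFlip_wedge_self (y : ℤ) :
    tasepFlip y (wedge y) = Function.update (wedge y) y 2 := by
  rw [tasepFlip, if_pos] <;> simp [wedge]

lemma le_tasepFlip (z : ℤ) (h : ℤ → ℤ) : h ≤ tasepFlip z h := by
  intro u
  unfold tasepFlip
  split_ifs
  · rcases eq_or_ne u z with rfl | hu
    · simp
    · rw [Function.update_of_ne hu]
  · rfl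

lemma tasepFlip_apply_self_of_lt {h : ℤ → ℤ} {z : ℤ} (hz : h z < h (z - 1) ∧ h z < h (z + 1)) :
    tasepFlip z h z = h z + 2 := by
  rw [tasepFlip, if_pos hz, Function.update_self]

lemma IsHeightFun.tasepFlip {h : ℤ → ℤ} (hh : IsHeightFun h) (z : ℤ) :
    IsHeightFun (tasepFlip z h) := by
  by_cases hz : h z < h (z - 1) ∧ h z < h (z + 1)
  · intro x
    have e₁ : h (z + 1) = h z + 1 := by rcases hh.step z with e | e <;> omega
    have e₂ : h (z - 1) = h z + 1 := by rcases hh.step_sub z with e | e <;> omega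
    rw [_root_.tasepFlip, if_pos hz]
    rcases eq_or_ne x z with rfl | hx
    · rw [Function.update_self, Function.update_of_ne (by omega : x + 1 ≠ x), e₁]
      norm_num
    rcases eq_or_ne (x + 1) z with hx₁ | hx₁
    · rw [hx₁, Function.update_self, Function.update_of_ne hx, (by omega : x = z - 1), e₂]
      norm_num
    · rw [Function.update_of_ne hx₁, Function.update_of_ne hx]
      exact hh x
  · rwa [_root_.tasepFlip, if_neg hz]

lemma IsHeightFun.applyEvents {h : ℤ → ℤ} (hh : IsHeightFun h) (L : List ℤ) :
    IsHeightFun (applyEvents L h) := by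
  induction L generalizing h with
  | nil => exact hh
  | cons z L ih => exact ih (hh.tasepFlip z)

lemma applyEvents_append (L₁ L₂ : List ℤ) (h : ℤ → ℤ) :
    applyEvents (L₁ ++ L₂) h = applyEvents L₂ (applyEvents L₁ h) :=
  List.foldl_append

lemma tasepFlip_monotoneOn (z : ℤ) : MonotoneOn (tasepFlip z) {g | IsHeightFun g} := by
  intro g hg g' hg' hle u
  replace hg : IsHeightFun g := hg
  replace hg' : IsHeightFun g' := hg'
  rcases eq_or_ne u z with rfl | hu
  · have : g (u - 1) ≤ g' (u - 1) := hle _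
    have : g (u + 1) ≤ g' (u + 1) := hle _
    have : g u ≤ g' u := hle _
    have := hg.step u; have := hg.step_sub u; have := hg'.step u; have := hg'.step_sub u
    unfold tasepFlip
    split_ifs <;> simp only [Function.update_self] <;> omega
  · unfold tasepFlip
    split_ifs <;> simp only [Function.update_of_ne hu] <;> exact hle u

lemma applyEvents_monotoneOn (L : List ℤ) : MonotoneOn (applyEvents L) {g | IsHeightFun g} := by
  induction L with
  | nil => exact fun _ _ _ _ hle => hle
  | cons z L ih =>
    intro g hg g' hg' hle
    exact ih (IsHeightFun.tasepFlip hg z) (IsHeightFun.tasepFlip hg' z)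
      (tasepFlip_monotoneOn z hg hg' hle)

lemma tasepFlip_const_add (z c : ℤ) (g : ℤ → ℤ) :
    tasepFlip z (fun u => c + g u) = fun u => c + tasepFlip z g u := by
  funext u
  unfold tasepFlip
  simp only [add_lt_add_iff_left]
  split_ifs
  · rcases eq_or_ne u z with rfl | hu
    · simp only [Function.update_self]; ring
    · simp only [Function.update_of_ne hu]
  · rfl

lemma applyEvents_const_add (L : List ℤ) (c : ℤ) (g : ℤ → ℤ) :
    applyEvents L (fun u => c + g u) = fun u => c + applyEvents L g u := by
  induction L generalizing g with
  | nil => rfl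
  | cons z L ih => exact (congrArg (applyEvents L) (tasepFlip_const_add z c g)).trans (ih _)

lemma applyEvents_le_add_wedge {h : ℤ → ℤ} (hh : IsHeightFun h) (L : List ℤ) (x y : ℤ) :
    applyEvents L h x ≤ h y + applyEvents L (wedge y) x := by
  have hle : h ≤ fun u => h y + wedge y u := fun u => hh.le_add_abs_sub u y
  have := applyEvents_monotoneOn L hh ((isHeightFun_wedge y).const_add (h y)) hle x
  rwa [applyEvents_const_add] at this

/-- The paper's rule for `x(s−)` given `x(s) = p`, an event at `z` and the height `g` just
before it: the path moves only at a suppressed jump attempt at `p`, to a neighbour one unit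
lower (at a local maximum either neighbour would do). -/
def backStep (g : ℤ → ℤ) (z p : ℤ) : ℤ :=
  if z ≠ p then p else if g (p - 1) < g p then p - 1 else if g (p + 1) < g p then p + 1 else p

lemma backStep_add_tasepFlip_wedge_le {g : ℤ → ℤ} (hg : IsHeightFun g) (z p : ℤ) :
    (fun u => g (backStep g z p) + tasepFlip z (wedge (backStep g z p)) u) ≤
      fun u => tasepFlip z g p + wedge p u := by
  intro u
  have hp : g p ≤ tasepFlip z g p := le_tasepFlip z g p
  have hneighbour : ∀ q, |p - q| = 1 → g q < g p → g q + |u - q| ≤ tasepFlip z g p + |u - p| :=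
    fun q hq hlt => by
      have := hg.le_add_abs_sub p q
      have := abs_sub_le u p q
      omega
  by_cases hz : z ≠ p
  · rw [backStep, if_pos hz, tasepFlip_wedge_of_ne hz]
    simp only [wedge]
    omega
  obtain rfl : z = p := not_not.mp hz
  rw [backStep, if_neg hz]
  split_ifs with h₁ h₂
  · rw [tasepFlip_wedge_of_ne (by omega : z ≠ z - 1)]
    exact hneighbour _ (by simp) h₁
  · rw [tasepFlip_wedge_of_ne (by omega : z ≠ z + 1)]
    exact hneighbour _ (by simp) h₂
  · have hmin : g z < g (z - 1) ∧ g z < g (z + 1) := by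
      rcases hg.step z with e | e <;> rcases hg.step_sub z with e' | e' <;> omega
    rw [tasepFlip_wedge_self, tasepFlip_apply_self_of_lt hmin]
    rcases eq_or_ne u z with rfl | hu
    · simp [wedge]
    · dsimp only
      rw [Function.update_of_ne hu]
      simp only [wedge]
      omega

/-- `backwardPath L h x k` is the position, after the first `k` events of `L`, of the backward
path that ends at `x` once all of `L` has been applied to `h`. -/
def backwardPath : List ℤ → (ℤ → ℤ) → ℤ → ℕ → ℤ
  | [], _, x, _ => x
  | z :: L, h, x, 0 => backStep h z (backwardPath L (tasepFlip z h) x 0)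
  | z :: L, h, x, k + 1 => backwardPath L (tasepFlip z h) x k

lemma backwardPath_length (L : List ℤ) (h : ℤ → ℤ) (x : ℤ) :
    backwardPath L h x L.length = x := by
  induction L generalizing h with
  | nil => rfl
  | cons z L ih => exact ih _

lemma backwardPath_eq_backwardPath_drop (L : List ℤ) (h : ℤ → ℤ) (x : ℤ) (k : ℕ) :
    backwardPath L h x k = backwardPath (L.drop k) (applyEvents (L.take k) h) x 0 := by
  induction L generalizing h k with
  | nil => simp [backwardPath]
  | cons z L ih =>
    cases k with
    | zero => rfl
    | succ k => exact ih _ k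

lemma applyEvents_eq_add_wedge_backwardPath {h : ℤ → ℤ} (hh : IsHeightFun h) (L : List ℤ)
    (x : ℤ) : applyEvents L h x =
      h (backwardPath L h x 0) + applyEvents L (wedge (backwardPath L h x 0)) x := by
  induction L generalizing h with
  | nil => simp [applyEvents, backwardPath, wedge]
  | cons z L ih =>
    set p := backwardPath L (tasepFlip z h) x 0
    set q := backStep h z p
    refine le_antisymm (applyEvents_le_add_wedge hh _ x q) ?_
    calc h q + applyEvents L (tasepFlip z (wedge q)) x
        = applyEvents L (fun u => h q + tasepFlip z (wedge q) u) x := by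
          rw [applyEvents_const_add]
      _ ≤ applyEvents L (fun u => tasepFlip z h p + wedge p u) x :=
          applyEvents_monotoneOn L (((isHeightFun_wedge q).tasepFlip z).const_add _)
            ((isHeightFun_wedge p).const_add _) (backStep_add_tasepFlip_wedge_le hh z p) x
      _ = tasepFlip z h p + applyEvents L (wedge p) x := by rw [applyEvents_const_add]
      _ = applyEvents L (tasepFlip z h) x := (ih (hh.tasepFlip z)).symm

/-- The intermediate time `τ` is encoded by the number `k` of events of `L` before it, and
`h^step_{y,τ}(x,t)` is `applyEvents (L.drop k) (fun z => |z - y|) x`. -/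
theorem tasep_concatenation (h : ℤ → ℤ) (hh : IsHeightFun h) (L : List ℤ) (x : ℤ) :
    ∃ path : ℕ → ℤ, path L.length = x ∧
      ∀ k ≤ L.length,
        (applyEvents L h x
          = applyEvents (L.take k) h (path k)
            + applyEvents (L.drop k) (fun z => |z - path k|) x) ∧
        (∀ y : ℤ, applyEvents L h x
          ≤ applyEvents (L.take k) h y + applyEvents (L.drop k) (fun z => |z - y|) x) := by
  refine ⟨backwardPath L h x, backwardPath_length L h x, fun k _ => ?_⟩
  have hsplit : applyEvents L h = applyEvents (L.drop k) (applyEvents (L.take k) h) := by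
    rw [← applyEvents_append, List.take_append_drop]
  have hk := hh.applyEvents (L.take k)
  rw [hsplit, backwardPath_eq_backwardPath_drop]
  exact ⟨applyEvents_eq_add_wedge_backwardPath hk _ x,
    fun y => applyEvents_le_add_wedge hk _ x y⟩
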